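/- The concave-case construction yields densities: Fix λ ∈ (0,1). For every ε ∈ (−ε̄, ε̄), the function f^ε is nonnegative on [0,1] and satisfies ∫_0^1 f^ε(x) dx = 1; that is, each f^ε is a probability density on [0,1]. -/

import Mathlib

open Set MeasureTheory

/-- `h̄ = (1 − √(1−λ))/2`. -/
noncomputable def hbar (lam : ℝ) : ℝ := (1 - Real.sqrt (1 - lam)) / 2

/-- `η̄ = (h̄·(1−h̄)^{1−λ}·(1−λ))⁻¹`. -/
noncomputable def etabar (lam : ℝ) : ℝ :=
  (hbar lam * (1 - hbar lam) ^ (1 - lam) * (1 - lam))⁻¹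

/-- `ε̄ = (1/2)·min(η̄, (2/3)·2^{−λ})`. -/
noncomputable def epsbar (lam : ℝ) : ℝ :=
  (1 / 2) * min (etabar lam) ((2 / 3) * (2:ℝ) ^ (-lam))

/-- The unnormalized density of the concave-case construction. -/
noncomputable def fBase (lam ε : ℝ) (x : ℝ) : ℝ :=
  (Ico (0:ℝ) (1/2)).indicator
      (fun x => ((2:ℝ) ^ (2 - lam) - 8 * hbar lam * ε) * x) x
    + (Icc (1/2 : ℝ) (1 - hbar lam)).indicator (fun x => x ^ (-(2 - lam))) x
    + (Ioc (1 - hbar lam) 1).indicator (fun _ => etabar lam + ε) x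

/-- The normalizing constant `c̄`, chosen so that `∫_0^1 f^0(x) dx = 1`. -/
noncomputable def cbar (lam : ℝ) : ℝ := (∫ x in (0:ℝ)..1, fBase lam 0 x)⁻¹

/-- The density `f^ε` of the concave-case construction. -/
noncomputable def fEps (lam ε : ℝ) (x : ℝ) : ℝ := cbar lam * fBase lam ε x

/-!
On `[0, 1/2)` the perturbation lowers the slope by `8h̄ε`, removing mass `h̄ε`, and on `(1 − h̄, 1]`
it raises the level by `ε`, adding mass `h̄ε`; so the unnormalized mass does not depend on `ε` and
equals `c̄⁻¹`. The bound `|ε| < ε̄` keeps the slope `2^{2−λ} − 8h̄ε` and the level `η̄ + ε`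
nonnegative.
-/

theorem intervalIntegral_indicator_of_Ioo_subset {a b c d : ℝ} {s : Set ℝ} {f : ℝ → ℝ}
    (hac : a ≤ c) (hcd : c ≤ d) (hdb : d ≤ b) (hs : MeasurableSet s)
    (hIoo : Ioo c d ⊆ s) (hIcc : s ⊆ Icc c d) :
    ∫ x in a..b, s.indicator f x = ∫ x in c..d, f x := by
  have hs_ae : s =ᵐ[volume] Ioc c d :=
    (hIcc.eventuallyLE.trans Ioc_ae_eq_Icc.symm.le).antisymm
      (Ioo_ae_eq_Ioc.symm.le.trans hIoo.eventuallyLE)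
  have hsub : Ioc c d ⊆ Ioc a b := Ioc_subset_Ioc hac hdb
  rw [intervalIntegral.integral_of_le (hac.trans (hcd.trans hdb)),
    intervalIntegral.integral_of_le hcd, setIntegral_indicator hs,
    setIntegral_congr_set ((ae_eq_refl _).inter hs_ae), inter_eq_right.mpr hsub]

theorem intervalIntegrable_indicator_of_subset {a b c d : ℝ} {s : Set ℝ} {f : ℝ → ℝ}
    (hs : MeasurableSet s) (hsub : s ⊆ Icc c d) (hf : ContinuousOn f (Icc c d)) :
    IntervalIntegrable (s.indicator f) volume a b :=
  ((hf.integrableOn_Icc.mono_set hsub).integrable_indicator hs).intervalIntegrable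

section ConcaveConstruction

variable {lam : ℝ}

theorem hbar_mem_Ioo (hlam : lam ∈ Ioo (0:ℝ) 1) : hbar lam ∈ Ioo (0:ℝ) (1/2) := by
  have hsqrt_pos : 0 < Real.sqrt (1 - lam) := Real.sqrt_pos.mpr (by linarith [hlam.2])
  have hsqrt_lt : Real.sqrt (1 - lam) < 1 := by
    rw [Real.sqrt_lt' one_pos]; linarith [hlam.1]
  constructor <;> (unfold hbar; linarith)

theorem etabar_pos (hlam : lam ∈ Ioo (0:ℝ) 1) : 0 < etabar lam := by
  obtain ⟨h0, hhalf⟩ := hbar_mem_Ioo hlam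
  have : 0 < (1 - hbar lam) ^ (1 - lam) := Real.rpow_pos_of_pos (by linarith) _
  have : 0 < 1 - lam := by linarith [hlam.2]
  unfold etabar
  positivity

theorem fBase_slope_nonneg (hlam : lam ∈ Ioo (0:ℝ) 1) {ε : ℝ} (hε : ε < epsbar lam) :
    0 ≤ (2:ℝ) ^ (2 - lam) - 8 * hbar lam * ε := by
  obtain ⟨h0, hhalf⟩ := hbar_mem_Ioo hlam
  have hpow : (2:ℝ) ^ (2 - lam) = 4 * (2:ℝ) ^ (-lam) := by
    rw [sub_eq_add_neg, Real.rpow_add two_pos]; norm_num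
  have hpos : 0 < (2:ℝ) ^ (-lam) := Real.rpow_pos_of_pos two_pos _
  have hε' : ε < (2:ℝ) ^ (-lam) / 3 := by
    have := min_le_right (etabar lam) ((2 / 3) * (2:ℝ) ^ (-lam))
    unfold epsbar at hε; linarith
  rw [hpow]
  nlinarith

theorem etabar_add_nonneg (hlam : lam ∈ Ioo (0:ℝ) 1) {ε : ℝ} (hε : -epsbar lam < ε) :
    0 ≤ etabar lam + ε := by
  have := min_le_left (etabar lam) ((2 / 3) * (2:ℝ) ^ (-lam))
  unfold epsbar at hε
  linarith [etabar_pos hlam]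

theorem fBase_nonneg (hlam : lam ∈ Ioo (0:ℝ) 1) {ε : ℝ}
    (hε : ε ∈ Ioo (-epsbar lam) (epsbar lam)) (x : ℝ) : 0 ≤ fBase lam ε x := by
  unfold fBase
  refine add_nonneg (add_nonneg ?_ ?_) ?_ <;> refine indicator_nonneg (fun y hy => ?_) x
  · exact mul_nonneg (fBase_slope_nonneg hlam hε.2) hy.1
  · exact Real.rpow_nonneg (by linarith [hy.1]) _
  · exact etabar_add_nonneg hlam hε.1

theorem integral_fBase (hlam : lam ∈ Ioo (0:ℝ) 1) (ε : ℝ) :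
    ∫ x in (0:ℝ)..1, fBase lam ε x
      = (2:ℝ) ^ (2 - lam) / 8 + (∫ x in (1/2:ℝ)..(1 - hbar lam), x ^ (-(2 - lam)))
        + etabar lam * hbar lam := by
  obtain ⟨h0, hhalf⟩ := hbar_mem_Ioo hlam
  set A := (2:ℝ) ^ (2 - lam) - 8 * hbar lam * ε
  have hlin : ∫ x in (0:ℝ)..1, (Ico (0:ℝ) (1/2)).indicator (fun x => A * x) x = A / 8 := by
    rw [intervalIntegral_indicator_of_Ioo_subset le_rfl (by norm_num) (by norm_num)
      measurableSet_Ico Ioo_subset_Ico_self Ico_subset_Icc_self,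
      intervalIntegral.integral_const_mul, integral_id]
    ring
  have hpow : ∫ x in (0:ℝ)..1, (Icc (1/2 : ℝ) (1 - hbar lam)).indicator
      (fun x => x ^ (-(2 - lam))) x = ∫ x in (1/2:ℝ)..(1 - hbar lam), x ^ (-(2 - lam)) :=
    intervalIntegral_indicator_of_Ioo_subset (by norm_num) (by linarith) (by linarith)
      measurableSet_Icc Ioo_subset_Icc_self subset_rfl
  have hconst : ∫ x in (0:ℝ)..1, (Ioc (1 - hbar lam) 1).indicator (fun _ => etabar lam + ε) x
      = hbar lam * (etabar lam + ε) := by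
    rw [intervalIntegral_indicator_of_Ioo_subset (by linarith) (by linarith) le_rfl
      measurableSet_Ioc Ioo_subset_Ioc_self Ioc_subset_Icc_self,
      intervalIntegral.integral_const, smul_eq_mul, sub_sub_cancel]
  have hint_lin : IntervalIntegrable ((Ico (0:ℝ) (1/2)).indicator (fun x => A * x)) volume 0 1 :=
    intervalIntegrable_indicator_of_subset measurableSet_Ico Ico_subset_Icc_self
      (continuousOn_const.mul continuousOn_id)
  have hint_pow : IntervalIntegrable ((Icc (1/2 : ℝ) (1 - hbar lam)).indicator
      (fun x => x ^ (-(2 - lam)))) volume 0 1 :=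
    intervalIntegrable_indicator_of_subset measurableSet_Icc subset_rfl
      (continuousOn_id.rpow_const fun x hx => Or.inl (by simp only [id]; linarith [hx.1]))
  have hint_const : IntervalIntegrable ((Ioc (1 - hbar lam) 1).indicator
      (fun _ => etabar lam + ε)) volume 0 1 :=
    intervalIntegrable_indicator_of_subset measurableSet_Ioc Ioc_subset_Icc_self
      continuousOn_const
  unfold fBase
  rw [intervalIntegral.integral_add (hint_lin.add hint_pow) hint_const,
    intervalIntegral.integral_add hint_lin hint_pow, hlin, hpow, hconst]
  ring

theorem integral_fBase_pos (hlam : lam ∈ Ioo (0:ℝ) 1) (ε : ℝ) :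
    0 < ∫ x in (0:ℝ)..1, fBase lam ε x := by
  obtain ⟨h0, hhalf⟩ := hbar_mem_Ioo hlam
  have hpow : 0 < (2:ℝ) ^ (2 - lam) := Real.rpow_pos_of_pos two_pos _
  have hJ : 0 ≤ ∫ x in (1/2:ℝ)..(1 - hbar lam), x ^ (-(2 - lam)) :=
    intervalIntegral.integral_nonneg (by linarith)
      (fun x hx => Real.rpow_nonneg (by linarith [hx.1]) _)
  have hη : 0 < etabar lam * hbar lam := mul_pos (etabar_pos hlam) h0
  rw [integral_fBase hlam ε]
  positivity

end ConcaveConstruction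

/-- The concave-case construction yields densities: for `λ ∈ (0,1)` and every
`ε ∈ (−ε̄, ε̄)`, the function `f^ε` is nonnegative on `[0,1]` and `∫_0^1 f^ε(x) dx = 1`. -/
theorem concave_construction_density (lam : ℝ) (hlam : lam ∈ Ioo (0:ℝ) 1)
    (ε : ℝ) (hε : ε ∈ Ioo (-epsbar lam) (epsbar lam)) :
    (∀ x ∈ Icc (0:ℝ) 1, 0 ≤ fEps lam ε x) ∧ (∫ x in (0:ℝ)..1, fEps lam ε x) = 1 := by
  have hmass := integral_fBase_pos hlam 0
  refine ⟨fun x _ => mul_nonneg (inv_pos.mpr hmass).le (fBase_nonneg hlam hε x), ?_⟩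
  rw [show fEps lam ε = fun x => cbar lam * fBase lam ε x from rfl,
    intervalIntegral.integral_const_mul, cbar, integral_fBase hlam ε, ← integral_fBase hlam 0]
  exact inv_mul_cancel₀ hmass.ne'
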